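/- Let c > 1 and let A be exponentially distributed with rate 1. Let W be a random variable, independent of A, whose law is the mixture (1/3)·δ_0 + (2/3)·Exp(1/(c−1)), i.e., P[W = 0] = 1/3 and P[W ∈ S] = ∫_S (2/(3(c−1))) e^{−x/(c−1)} dx for Borel S ⊆ (0,∞). Then max(0, (c−1)A − W) has the same distribution as W, and E[W] = 2(c−1)/3. -/

import Mathlib

/-!
Put `a = c - 1`. Laws on `ℝ` are determined by their distribution functions, and for `x ≥ 0`,
conditioning on `W` gives
`P(max(0, aA - W) ≤ x) = E[1 - e^{-(x + W)/a}] = (1/3)(1 - e^{-x/a}) + (2/3)(1 - e^{-x/a}/2)`,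
the factor `1/2` being the Laplace transform `E[e^{-sV}] = r/(r + s)` of `V ~ Exp(r)` at
`s = r = 1/a`. This equals `1 - (2/3)e^{-x/a} = P(W ≤ x)`. Finally `E[W] = (2/3)·a`, as the
exponential part has mean `a`.
-/

open MeasureTheory ProbabilityTheory Set Real
open scoped ENNReal

lemma MeasureTheory.Measure.ext_of_measure_compl_eq_zero {α : Type*} [MeasurableSpace α]
    {μ ν : Measure α} [IsFiniteMeasure μ] {T : Set α} (hT : MeasurableSet T)
    (huniv : μ univ = ν univ) (hνT : ν Tᶜ = 0)
    (h : ∀ s, MeasurableSet s → s ⊆ T → μ s = ν s) : μ = ν := by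
  have hνT_ne_top : ν T ≠ ∞ := ne_top_of_le_ne_top (huniv ▸ measure_ne_top μ univ)
    (measure_mono (subset_univ T))
  have hμT : μ Tᶜ = 0 := by
    rw [measure_compl hT (measure_ne_top μ T), huniv, h T hT subset_rfl,
      ← measure_compl hT hνT_ne_top, hνT]
  ext s hs
  rw [← measure_inter_conull hμT, ← measure_inter_conull hνT,
    h _ (hs.inter hT) inter_subset_right]

namespace ProbabilityTheory

section ExpMeasure

variable {r : ℝ}

lemma expMeasure_eq_withDensity (r : ℝ) : expMeasure r = volume.withDensity (exponentialPDF r) :=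
  rfl

lemma expMeasure_Iio_zero (r : ℝ) : expMeasure r (Iio 0) = 0 := by
  rw [expMeasure_eq_withDensity, withDensity_apply _ measurableSet_Iio]
  exact lintegral_exponentialPDF_of_nonpos le_rfl

lemma ae_nonneg_expMeasure (r : ℝ) : ∀ᵐ x ∂expMeasure r, 0 ≤ x :=
  measure_mono_null (fun _ (hx : ¬0 ≤ _) => mem_Iio.2 (not_le.mp hx)) (expMeasure_Iio_zero r)

lemma expMeasure_Iic (hr : 0 < r) (x : ℝ) :
    expMeasure r (Iic x) = ENNReal.ofReal (1 - exp (-(r * x))) := by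
  have := isProbabilityMeasure_expMeasure hr
  rw [← ofReal_cdf, cdf_expMeasure_eq hr]
  split_ifs with hx
  · rfl
  -- for `x < 0` the right-hand side is `ENNReal.ofReal` of a negative number, hence `0`
  · rw [ENNReal.ofReal_zero, eq_comm, ENNReal.ofReal_eq_zero, sub_nonpos, one_le_exp_iff]
    nlinarith

lemma expMeasure_apply_of_subset_Ioi (hr : 0 < r) {S : Set ℝ} (hS : MeasurableSet S)
    (hS0 : S ⊆ Ioi 0) : expMeasure r S = ENNReal.ofReal (∫ x in S, r * exp (-(r * x))) := by
  have hint : IntegrableOn (fun x => r * exp (-(r * x))) S := by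
    have h := (exp_neg_integrableOn_Ioi 0 hr).mono_set hS0
    simp only [neg_mul] at h
    exact h.const_mul r
  rw [expMeasure_eq_withDensity, withDensity_apply _ hS,
    ofReal_integral_eq_lintegral_ofReal hint (ae_of_all _ fun x => by positivity)]
  exact setLIntegral_congr_fun hS fun x hx => exponentialPDF_of_nonneg (hS0 hx).le

lemma toReal_exponentialPDF_smul (hr : 0 < r) (f : ℝ → ℝ) :
    (fun x => (exponentialPDF r x).toReal • f x)
      = (Ici 0).indicator (fun x => r * exp (-(r * x)) * f x) := by
  ext x
  by_cases hx : 0 ≤ x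
  · rw [exponentialPDF_of_nonneg hx, indicator_of_mem (mem_Ici.2 hx),
      ENNReal.toReal_ofReal (by positivity), smul_eq_mul]
  · rw [exponentialPDF_of_neg (not_le.mp hx), indicator_of_notMem (notMem_Ici.2 (not_le.mp hx)),
      ENNReal.toReal_zero, zero_smul]

lemma measurable_exponentialPDF (r : ℝ) : Measurable (exponentialPDF r) :=
  (measurable_exponentialPDFReal r).ennreal_ofReal

lemma integral_expMeasure (hr : 0 < r) (f : ℝ → ℝ) :
    ∫ x, f x ∂expMeasure r = ∫ x in Ioi 0, r * exp (-(r * x)) * f x := by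
  rw [expMeasure_eq_withDensity, integral_withDensity_eq_integral_toReal_smul
    (measurable_exponentialPDF r) (ae_of_all _ fun _ => ENNReal.ofReal_lt_top),
    toReal_exponentialPDF_smul hr, integral_indicator measurableSet_Ici,
    integral_Ici_eq_integral_Ioi]

lemma integrable_expMeasure_iff (hr : 0 < r) {f : ℝ → ℝ} :
    Integrable f (expMeasure r) ↔ IntegrableOn (fun x => r * exp (-(r * x)) * f x) (Ioi 0) := by
  rw [expMeasure_eq_withDensity, integrable_withDensity_iff_integrable_smul'
    (measurable_exponentialPDF r) (ae_of_all _ fun _ => ENNReal.ofReal_lt_top),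
    toReal_exponentialPDF_smul hr, integrable_indicator_iff measurableSet_Ici,
    integrableOn_Ici_iff_integrableOn_Ioi]

lemma integral_exp_neg_mul_expMeasure (hr : 0 < r) {s : ℝ} (hrs : 0 < r + s) :
    ∫ x, exp (-(s * x)) ∂expMeasure r = r / (r + s) := by
  rw [integral_expMeasure hr]
  calc ∫ x in Ioi 0, r * exp (-(r * x)) * exp (-(s * x))
      = r * ∫ x in Ioi 0, exp (-(r + s) * x) := by
        rw [← integral_const_mul]
        congr 1; ext x
        rw [mul_assoc, ← exp_add]; ring_nf
    _ = r / (r + s) := by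
        rw [integral_exp_mul_Ioi (by linarith) 0]
        field_simp
        simp

lemma integral_mul_exp_neg_mul_Ioi (hr : 0 < r) :
    ∫ x in Ioi 0, x * exp (-(r * x)) = (r ^ 2)⁻¹ := by
  have h := integral_rpow_mul_exp_neg_mul_Ioi two_pos hr
  norm_num [rpow_one] at h
  exact h

lemma integrableOn_mul_exp_neg_mul_Ioi (hr : 0 < r) :
    IntegrableOn (fun x => x * exp (-(r * x))) (Ioi 0) :=
  .of_integral_ne_zero (by rw [integral_mul_exp_neg_mul_Ioi hr]; positivity)

lemma integrable_id_expMeasure (hr : 0 < r) : Integrable (fun x => x) (expMeasure r) := by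
  rw [integrable_expMeasure_iff hr]
  have h : IntegrableOn (fun x => r * (x * exp (-(r * x)))) (Ioi 0) :=
    (integrableOn_mul_exp_neg_mul_Ioi hr).const_mul r
  exact h.congr_fun (fun x _ => by ring) measurableSet_Ioi

lemma integral_id_expMeasure (hr : 0 < r) : ∫ x, x ∂expMeasure r = r⁻¹ := by
  have h : ∀ x, r * exp (-(r * x)) * x = r * (x * exp (-(r * x))) := fun x => by ring
  simp_rw [integral_expMeasure hr, h, integral_const_mul, integral_mul_exp_neg_mul_Ioi hr]
  field_simp

lemma lintegral_ofReal_one_sub_exp_expMeasure (hr : 0 < r) {s x : ℝ} (hs : 0 ≤ s)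
    (hx : 0 ≤ x) :
    ∫⁻ w, ENNReal.ofReal (1 - exp (-(s * (x + w)))) ∂expMeasure r
      = ENNReal.ofReal (1 - exp (-(s * x)) * (r / (r + s))) := by
  have := isProbabilityMeasure_expMeasure hr
  have hexp : Integrable (fun w => exp (-(s * w))) (expMeasure r) := by
    refine .of_bound (by fun_prop) 1 ((ae_nonneg_expMeasure r).mono fun w hw => ?_)
    rw [norm_of_nonneg (exp_pos _).le, exp_le_one_iff, neg_nonpos]
    positivity
  have hsplit : ∀ w, 1 - exp (-(s * (x + w))) = 1 - exp (-(s * x)) * exp (-(s * w)) :=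
    fun w => by rw [← exp_add]; ring_nf
  have hnonneg : ∀ᵐ w ∂expMeasure r, 0 ≤ 1 - exp (-(s * (x + w))) :=
    (ae_nonneg_expMeasure r).mono fun w hw => by
      rw [sub_nonneg, exp_le_one_iff, neg_nonpos]
      positivity
  have hint : Integrable (fun w => 1 - exp (-(s * x)) * exp (-(s * w))) (expMeasure r) :=
    (integrable_const 1).sub (hexp.const_mul _)
  simp_rw [hsplit] at hnonneg ⊢
  rw [← ofReal_integral_eq_lintegral_ofReal hint hnonneg,
    integral_sub (integrable_const 1) (hexp.const_mul _), integral_const_mul,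
    integral_exp_neg_mul_expMeasure hr (by linarith)]
  simp

end ExpMeasure

noncomputable def waitingLaw (a : ℝ) : Measure ℝ :=
  ENNReal.ofReal (1 / 3) • Measure.dirac 0 + ENNReal.ofReal (2 / 3) • expMeasure a⁻¹

section WaitingLaw

variable {a : ℝ}

lemma isProbabilityMeasure_waitingLaw (ha : 0 < a) : IsProbabilityMeasure (waitingLaw a) := by
  have := isProbabilityMeasure_expMeasure (inv_pos.2 ha)
  constructor
  rw [waitingLaw, Measure.add_apply, Measure.smul_apply, Measure.smul_apply, measure_univ,
    measure_univ, smul_eq_mul, smul_eq_mul, mul_one, mul_one,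
    ← ENNReal.ofReal_add (by norm_num) (by norm_num)]
  norm_num

lemma waitingLaw_Iio_zero (a : ℝ) : waitingLaw a (Iio 0) = 0 := by
  simp [waitingLaw, expMeasure_Iio_zero]

lemma waitingLaw_singleton_zero (a : ℝ) : waitingLaw a {0} = ENNReal.ofReal (1 / 3) := by
  have h : expMeasure a⁻¹ {0} = 0 :=
    withDensity_absolutelyContinuous _ _ Real.volume_singleton
  simp [waitingLaw, h]

lemma waitingLaw_apply_of_subset_Ioi (ha : 0 < a) {S : Set ℝ} (hS : MeasurableSet S)
    (hS0 : S ⊆ Ioi 0) :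
    waitingLaw a S = ENNReal.ofReal (∫ x in S, 2 / (3 * a) * exp (-x / a)) := by
  have h0 : (0 : ℝ) ∉ S := fun h => lt_irrefl 0 (mem_Ioi.1 (hS0 h))
  rw [waitingLaw, Measure.add_apply, Measure.smul_apply, Measure.smul_apply,
    Measure.dirac_apply' 0 hS, indicator_of_notMem h0,
    expMeasure_apply_of_subset_Ioi (inv_pos.2 ha) hS hS0, smul_eq_mul, smul_eq_mul, mul_zero,
    zero_add, ← ENNReal.ofReal_mul (by norm_num), ← integral_const_mul]
  refine congrArg ENNReal.ofReal (setIntegral_congr_fun hS fun x _ => ?_)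
  rw [neg_div, div_eq_inv_mul x]
  field_simp

lemma waitingLaw_Iic (ha : 0 < a) {x : ℝ} (hx : 0 ≤ x) :
    waitingLaw a (Iic x) = ENNReal.ofReal (1 - 2 / 3 * exp (-x / a)) := by
  rw [waitingLaw, Measure.add_apply, Measure.smul_apply, Measure.smul_apply,
    Measure.dirac_apply_of_mem (mem_Iic.2 hx), expMeasure_Iic (inv_pos.2 ha), smul_eq_mul,
    smul_eq_mul, mul_one, ← ENNReal.ofReal_mul (by norm_num),
    ← ENNReal.ofReal_add (by norm_num)]
  · congr 1
    rw [neg_div, div_eq_inv_mul x]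
    ring
  · have : exp (-(a⁻¹ * x)) ≤ 1 := exp_le_one_iff.2 (neg_nonpos.2 (by positivity))
    nlinarith

lemma lintegral_waitingLaw (a : ℝ) (f : ℝ → ℝ≥0∞) :
    ∫⁻ x, f x ∂waitingLaw a
      = ENNReal.ofReal (1 / 3) * f 0
        + ENNReal.ofReal (2 / 3) * ∫⁻ x, f x ∂expMeasure a⁻¹ := by
  rw [waitingLaw, lintegral_add_measure, lintegral_smul_measure, lintegral_smul_measure,
    lintegral_dirac, smul_eq_mul, smul_eq_mul]

lemma integral_id_waitingLaw (ha : 0 < a) : ∫ x, x ∂waitingLaw a = 2 * a / 3 := by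
  rw [waitingLaw, integral_add_measure, integral_smul_measure, integral_smul_measure,
    integral_dirac, integral_id_expMeasure (inv_pos.2 ha)]
  · rw [smul_eq_mul, smul_eq_mul, mul_zero, zero_add,
      ENNReal.toReal_ofReal (by norm_num : (0 : ℝ) ≤ 2 / 3)]
    field_simp
  · exact (integrable_dirac (by simp)).smul_measure ENNReal.ofReal_ne_top
  · exact (integrable_id_expMeasure (inv_pos.2 ha)).smul_measure ENNReal.ofReal_ne_top

lemma eq_waitingLaw (ha : 0 < a) {μ : Measure ℝ} [IsProbabilityMeasure μ]
    (h0 : μ {0} = ENNReal.ofReal (1 / 3))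
    (hpos : ∀ S, MeasurableSet S → S ⊆ Ioi 0 →
      μ S = ENNReal.ofReal (∫ x in S, 2 / (3 * a) * exp (-x / a))) :
    μ = waitingLaw a := by
  have := isProbabilityMeasure_waitingLaw ha
  refine Measure.ext_of_measure_compl_eq_zero measurableSet_Ici (by simp)
    (by rw [compl_Ici, waitingLaw_Iio_zero]) fun s hs hs0 => ?_
  have hatom : ∀ ρ : Measure ℝ, ρ (s ∩ {0}) = (ρ {0} • Measure.dirac 0) s := fun ρ => by
    rw [← Measure.restrict_singleton, Measure.restrict_apply hs]
  have hdiff : s \ {0} ⊆ Ioi 0 := fun x hx => lt_of_le_of_ne (hs0 hx.1) (Ne.symm hx.2)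
  have hdiff_meas : MeasurableSet (s \ {0}) := hs.diff (measurableSet_singleton 0)
  rw [← measure_inter_add_sdiff s (measurableSet_singleton 0),
    ← measure_inter_add_sdiff s (measurableSet_singleton 0) (μ := waitingLaw a), hatom, hatom,
    h0, waitingLaw_singleton_zero, hpos _ hdiff_meas hdiff,
    waitingLaw_apply_of_subset_Ioi ha hdiff_meas hdiff]

theorem map_max_sub_waitingLaw (ha : 0 < a) :
    ((waitingLaw a).prod (expMeasure 1)).map (fun p => max 0 (a * p.2 - p.1)) = waitingLaw a := by
  have := isProbabilityMeasure_waitingLaw ha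
  have := isProbabilityMeasure_expMeasure one_pos
  have hf : Measurable fun p : ℝ × ℝ => max 0 (a * p.2 - p.1) := by fun_prop
  have := Measure.isProbabilityMeasure_map hf.aemeasurable
    (μ := (waitingLaw a).prod (expMeasure 1))
  refine Measure.ext_of_Iic _ _ fun x => ?_
  rw [Measure.map_apply hf measurableSet_Iic]
  rcases lt_or_ge x 0 with hx | hx
  · have hempty : (fun p : ℝ × ℝ => max 0 (a * p.2 - p.1)) ⁻¹' Iic x = ∅ :=
      eq_empty_of_forall_notMem fun p hp => (hx.trans_le (le_max_left _ _)).not_ge hp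
    rw [hempty, measure_empty]
    exact (measure_mono_null (Iic_subset_Iio.2 hx) (waitingLaw_Iio_zero a)).symm
  · have hpre : (fun p : ℝ × ℝ => max 0 (a * p.2 - p.1)) ⁻¹' Iic x
        = {p | p.2 ≤ a⁻¹ * (x + p.1)} := by
      ext p
      rw [mem_preimage, mem_Iic, max_le_iff, mem_ofPred_eq, le_inv_mul_iff₀ ha]
      constructor
      · rintro ⟨-, h⟩; linarith
      · intro h; exact ⟨hx, by linarith⟩
    rw [hpre, Measure.prod_apply (measurableSet_le (by fun_prop) (by fun_prop))]
    change ∫⁻ w, expMeasure 1 (Iic (a⁻¹ * (x + w))) ∂waitingLaw a = _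
    simp_rw [expMeasure_Iic one_pos, one_mul]
    rw [lintegral_waitingLaw, add_zero,
      lintegral_ofReal_one_sub_exp_expMeasure (inv_pos.2 ha) (inv_pos.2 ha).le hx,
      waitingLaw_Iic ha hx, neg_div, div_eq_inv_mul x]
    have he : exp (-(a⁻¹ * x)) ≤ 1 := exp_le_one_iff.2 (neg_nonpos.2 (by positivity))
    have hhalf : a⁻¹ / (a⁻¹ + a⁻¹) = 1 / 2 := by field_simp; norm_num
    rw [hhalf, ← ENNReal.ofReal_mul (by norm_num), ← ENNReal.ofReal_mul (by norm_num),
      ← ENNReal.ofReal_add (by nlinarith) (by nlinarith)]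
    congr 1
    ring

end WaitingLaw

end ProbabilityTheory

/-- Linear dependence `B = cA`, `c > 1`: if `A ~ Exp(1)` and `W` is independent of `A`
with law `(1/3)δ₀ + (2/3)Exp(1/(c-1))`, then `max (0, (c-1)A - W)` has the same law as
`W`, and `E[W] = 2(c-1)/3`. -/
theorem stmt16 {Ω : Type*} [MeasurableSpace Ω] (Pr : Measure Ω) [IsProbabilityMeasure Pr]
    (c : ℝ) (hc : 1 < c)
    (A W : Ω → ℝ) (hA : Measurable A) (hW : Measurable W)
    (hA_exp : ∀ x : ℝ, Pr {ω | A ω ≤ x} = ENNReal.ofReal (1 - Real.exp (-x)))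
    (h_indep : IndepFun W A Pr)
    (hW0 : Pr {ω | W ω = 0} = ENNReal.ofReal (1 / 3))
    (hW_density : ∀ S : Set ℝ, MeasurableSet S → S ⊆ Set.Ioi 0 →
      Pr {ω | W ω ∈ S}
        = ENNReal.ofReal (∫ x in S, (2 / (3 * (c - 1))) * Real.exp (-x / (c - 1)))) :
    Measure.map (fun ω => max 0 ((c - 1) * A ω - W ω)) Pr = Measure.map W Pr
      ∧ ∫ ω, W ω ∂Pr = 2 * (c - 1) / 3 := by
  have ha : 0 < c - 1 := sub_pos.2 hc
  have := Measure.isProbabilityMeasure_map hW.aemeasurable (μ := Pr)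
  have hA_law : Pr.map A = expMeasure 1 := by
    have := Measure.isProbabilityMeasure_map hA.aemeasurable (μ := Pr)
    refine Measure.ext_of_Iic _ _ fun x => ?_
    rw [Measure.map_apply hA measurableSet_Iic, expMeasure_Iic one_pos, one_mul]
    exact hA_exp x
  have hW_law : Pr.map W = waitingLaw (c - 1) := by
    refine eq_waitingLaw ha ?_ fun S hS hS0 => ?_
    · rw [Measure.map_apply hW (measurableSet_singleton 0)]
      exact hW0
    · rw [Measure.map_apply hW hS]
      exact hW_density S hS hS0
  have h_pair : Pr.map (fun ω => (W ω, A ω)) = (Pr.map W).prod (Pr.map A) :=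
    (indepFun_iff_map_prod_eq_prod_map_map hW.aemeasurable hA.aemeasurable).1 h_indep
  refine ⟨?_, ?_⟩
  · calc Pr.map (fun ω => max 0 ((c - 1) * A ω - W ω))
        = (Pr.map fun ω => (W ω, A ω)).map (fun p => max 0 ((c - 1) * p.2 - p.1)) := by
          rw [Measure.map_map (by fun_prop) (hW.prodMk hA)]
          rfl
      _ = Pr.map W := by rw [h_pair, hW_law, hA_law, map_max_sub_waitingLaw ha]
  · calc ∫ ω, W ω ∂Pr = ∫ x, x ∂Pr.map W :=
          (integral_map hW.aemeasurable aestronglyMeasurable_id).symm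
      _ = 2 * (c - 1) / 3 := by rw [hW_law, integral_id_waitingLaw ha]
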